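/- For a node x in the uniform recursive tree U_g with label {0, i_1, …, i_n}, its resistance distance (the sum of resistance distances from x to all nodes) equals r_x(g) = g·f·(f+1)^{g−1} + (f+1)^g·[n − 2·Σ_{k=1}^{n} (f+1)^{−i_k}]. -/

import Mathlib

open Matrix BigOperators

/-- The vertices of the uniform recursive tree `U_g` with branching parameter `f`:
`U_0` is a single node (the central node), and at each iteration every existing
node receives `f` new leaf children. -/
def URTV (f : ℕ) : ℕ → Type
  | 0 => Unit
  | g + 1 => URTV f g ⊕ (URTV f g × Fin f)

instance urtFintype (f : ℕ) : ∀ g, Fintype (URTV f g)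
  | 0 => inferInstanceAs (Fintype Unit)
  | g + 1 =>
    letI := urtFintype f g
    inferInstanceAs (Fintype (URTV f g ⊕ (URTV f g × Fin f)))

instance urtDecEq (f : ℕ) : ∀ g, DecidableEq (URTV f g)
  | 0 => inferInstanceAs (DecidableEq Unit)
  | g + 1 =>
    letI := urtDecEq f g
    inferInstanceAs (DecidableEq (URTV f g ⊕ (URTV f g × Fin f)))

/-- The adjacency relation of `U_g`: each new leaf is joined to the node it was
attached to. -/
def urtRel (f : ℕ) : ∀ g, URTV f g → URTV f g → Prop
  | 0, _, _ => False
  | g + 1, Sum.inl x, Sum.inl y => urtRel f g x y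
  | _ + 1, Sum.inl x, Sum.inr (y, _) => x = y
  | _ + 1, Sum.inr (x, _), Sum.inl y => x = y
  | _ + 1, Sum.inr _, Sum.inr _ => False

/-- The uniform recursive tree `U_g` as a simple graph. -/
def urtGraph (f g : ℕ) : SimpleGraph (URTV f g) :=
  SimpleGraph.fromRel (urtRel f g)

/-- The central node of `U_g`. -/
def urtCenter (f : ℕ) : ∀ g, URTV f g
  | 0 => ()
  | g + 1 => Sum.inl (urtCenter f g)

/-- The label `{0, i_1, …, i_n}` of a node of `U_g`: the increasing list of levels
(creation iterations) of the nodes on the unique path from the central node to the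
node.  The central node has label `[0]`; a node created at iteration `g+1` appends
`g+1` to the label of the node it was attached to. -/
def urtLabel (f : ℕ) : ∀ g, URTV f g → List ℕ
  | 0, _ => [0]
  | g + 1, Sum.inl x => urtLabel f g x
  | g + 1, Sum.inr (x, _) => urtLabel f g x ++ [g + 1]

/-- The all-ones matrix `J`. -/
def JMat (V : Type*) : Matrix V V ℝ := Matrix.of fun _ _ => (1 : ℝ)

/-- The Laplacian matrix (over `ℝ`) of a simple graph (all edge weights `1`). -/
noncomputable def glap {V : Type*} [Fintype V] (G : SimpleGraph V) : Matrix V V ℝ := by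
  classical exact SimpleGraph.lapMatrix ℝ G

/-- The pseudoinverse `L† = (L + (1/N)·J)⁻¹ - (1/N)·J` of the graph Laplacian. -/
noncomputable def gdag {V : Type*} [Fintype V] [DecidableEq V] (G : SimpleGraph V) :
    Matrix V V ℝ :=
  (glap G + ((Fintype.card V : ℝ))⁻¹ • JMat V)⁻¹ - ((Fintype.card V : ℝ))⁻¹ • JMat V

/-! Distances in `U_{g+1}` are read off from `U_g`: old nodes keep their mutual distances, and a
new leaf is one step farther than its parent from every node other than itself. So the sum `S` of
distances from an old node `x` becomes `(f+1) S + f N_g`, and a leaf attached to `x` has sum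
`N_{g+1} - 2` more than `x`. The closed form satisfies the same two recurrences, since passing from
`x` to the leaf appends the level `g+1` to the label. -/

namespace SimpleGraph

variable {V : Type*} {G : SimpleGraph V}

lemma Walk.le_add_length_of_adj {h : V → ℕ} (hh : ∀ a b, G.Adj a b → h a ≤ h b + 1)
    {a b : V} (w : G.Walk a b) : h a ≤ h b + w.length := by
  induction w with
  | nil => simp
  | cons hadj _ ih =>
      have := hh _ _ hadj
      rw [Walk.length_cons]
      omega

lemma dist_eq_of_exists_walk_of_adj (d : V → V → ℕ) (hself : ∀ a, d a a = 0)
    (hadj : ∀ a b c, G.Adj a b → d a c ≤ d b c + 1)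
    (hwalk : ∀ a b, ∃ w : G.Walk a b, w.length = d a b) (a b : V) :
    G.dist a b = d a b := by
  obtain ⟨w, hw⟩ := hwalk a b
  refine le_antisymm (hw ▸ dist_le w) ?_
  obtain ⟨p, hp⟩ := Reachable.exists_walk_length_eq_dist ⟨w⟩
  have := p.le_add_length_of_adj (h := fun v => d v b) fun u v huv => hadj u v b huv
  rw [hself, hp] at this
  omega

end SimpleGraph

section URT

open SimpleGraph

variable {f : ℕ}

def urtDist (f : ℕ) : ∀ g, URTV f g → URTV f g → ℕ
  | 0, _, _ => 0
  | g + 1, .inl x, .inl y => urtDist f g x y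
  | g + 1, .inl x, .inr (y, _) => urtDist f g x y + 1
  | g + 1, .inr (x, _), .inl y => urtDist f g x y + 1
  | g + 1, .inr p, .inr q => if p = q then 0 else urtDist f g p.1 q.1 + 2

lemma urtDist_self : ∀ {g} (x : URTV f g), urtDist f g x x = 0
  | 0, _ => rfl
  | _ + 1, .inl x => urtDist_self x
  | _ + 1, .inr _ => if_pos rfl

lemma urtDist_inr_of_ne {g : ℕ} {x : URTV f g} {j : Fin f} {c : URTV f (g + 1)}
    (hc : c ≠ .inr (x, j)) :
    urtDist f (g + 1) (.inr (x, j)) c = urtDist f (g + 1) (.inl x) c + 1 := by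
  rcases c with y | q
  · rfl
  · have hq : (x, j) ≠ q := fun h => hc (h ▸ rfl)
    simp [urtDist, hq]

lemma urtGraph_adj {g : ℕ} {a b : URTV f g} :
    (urtGraph f g).Adj a b ↔ a ≠ b ∧ (urtRel f g a b ∨ urtRel f g b a) :=
  SimpleGraph.fromRel_adj _ _ _

lemma urtGraph_adj_inl_inr {g : ℕ} (x : URTV f g) (j : Fin f) :
    (urtGraph f (g + 1)).Adj (.inl x) (.inr (x, j)) :=
  urtGraph_adj.2 ⟨Sum.inl_ne_inr, .inl rfl⟩

def urtInl (f g : ℕ) : urtGraph f g →g urtGraph f (g + 1) where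
  toFun := .inl
  map_rel' h := urtGraph_adj.2 ⟨Sum.inl_injective.ne (urtGraph_adj.1 h).1, (urtGraph_adj.1 h).2⟩

lemma exists_walk_length_eq_urtDist : ∀ {g} (x y : URTV f g),
    ∃ w : (urtGraph f g).Walk x y, w.length = urtDist f g x y
  | 0, (), () => ⟨.nil, rfl⟩
  -- After matching, endpoints have the unfolded type `URTV f g ⊕ _`, on which `rw` and `simp`
  -- cannot abstract walk lengths; hence the explicit `Eq.trans` chains.
  | g + 1, .inl x, .inl y => by
      obtain ⟨w, hw⟩ := exists_walk_length_eq_urtDist x y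
      exact ⟨w.map (urtInl f g), (w.length_map _).trans hw⟩
  | g + 1, .inl x, .inr (y, j) => by
      obtain ⟨w, hw⟩ := exists_walk_length_eq_urtDist x y
      exact ⟨(w.map (urtInl f g)).concat (urtGraph_adj_inl_inr y j),
        (Walk.length_concat _ _).trans (congrArg (· + 1) ((w.length_map _).trans hw))⟩
  | g + 1, .inr (x, i), .inl y => by
      obtain ⟨w, hw⟩ := exists_walk_length_eq_urtDist x y
      exact ⟨.cons (urtGraph_adj_inl_inr x i).symm (w.map (urtInl f g)),
        (Walk.length_cons _ _).trans (congrArg (· + 1) ((w.length_map _).trans hw))⟩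
  | g + 1, .inr p, .inr q => by
      by_cases hpq : p = q
      · subst hpq
        exact ⟨.nil, (urtDist_self _).symm⟩
      obtain ⟨w, hw⟩ := exists_walk_length_eq_urtDist p.1 q.1
      refine ⟨.cons (urtGraph_adj_inl_inr p.1 p.2).symm
        ((w.map (urtInl f g)).concat (urtGraph_adj_inl_inr q.1 q.2)), ?_⟩
      refine (Walk.length_cons _ _).trans <| (congrArg (· + 1) <| (Walk.length_concat _ _).trans
        (congrArg (· + 1) ((w.length_map _).trans hw))).trans ?_
      simp [urtDist, hpq]

lemma urtDist_le_of_urtRel : ∀ {g} {a b : URTV f g}, urtRel f g a b → ∀ c,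
    urtDist f g a c ≤ urtDist f g b c + 1 ∧ urtDist f g b c ≤ urtDist f g a c + 1
  | 0, _, _, h, _ => h.elim
  | g + 1, .inl x, .inl y, h, .inl z => urtDist_le_of_urtRel (g := g) (a := x) (b := y) h z
  | g + 1, .inl x, .inl y, h, .inr (z, _) => by
      have := urtDist_le_of_urtRel (g := g) (a := x) (b := y) h z
      simp only [urtDist]
      omega
  | _ + 1, .inl x, .inr (_, j), rfl, c
  | _ + 1, .inr (x, j), .inl _, rfl, c => by
      by_cases hc : c = .inr (x, j)
      · subst hc
        simp [urtDist, urtDist_self]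
      · rw [urtDist_inr_of_ne hc]
        omega
  | _ + 1, .inr _, .inr _, h, _ => h.elim

lemma urtGraph_dist_eq {g : ℕ} (a b : URTV f g) : (urtGraph f g).dist a b = urtDist f g a b :=
  SimpleGraph.dist_eq_of_exists_walk_of_adj _ urtDist_self
    (fun _ _ c h => (urtGraph_adj.1 h).2.elim (fun h => (urtDist_le_of_urtRel h c).1)
      (fun h => (urtDist_le_of_urtRel h c).2))
    exists_walk_length_eq_urtDist a b

lemma card_URTV (f : ℕ) : ∀ g, Fintype.card (URTV f g) = (f + 1) ^ g
  | 0 => rfl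
  | g + 1 => by
      have : Fintype.card (URTV f (g + 1)) = Fintype.card (URTV f g ⊕ URTV f g × Fin f) := rfl
      rw [this, Fintype.card_sum, Fintype.card_prod, Fintype.card_fin, card_URTV f g]
      ring

lemma sum_urtDist_inl {g : ℕ} (x : URTV f g) :
    ∑ c, (urtDist f (g + 1) (.inl x) c : ℝ) =
      (f + 1) * ∑ y, (urtDist f g x y : ℝ) + f * (f + 1) ^ g := by
  refine (Fintype.sum_sum_type _).trans ?_
  rw [Fintype.sum_prod_type]
  simp only [urtDist, Nat.cast_add, Nat.cast_one, Nat.cast_pow, Finset.sum_const,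
    Finset.card_univ, Fintype.card_fin, nsmul_eq_mul, Finset.sum_add_distrib, ← Finset.mul_sum,
    card_URTV]
  ring

lemma sum_urtDist_inr {g : ℕ} (x : URTV f g) (j : Fin f) :
    ∑ c, (urtDist f (g + 1) (.inr (x, j)) c : ℝ) =
      ∑ c, (urtDist f (g + 1) (.inl x) c : ℝ) + (f + 1) ^ (g + 1) - 2 := by
  classical
  set v : URTV f (g + 1) := .inr (x, j)
  have key : ∀ c, (urtDist f (g + 1) v c : ℝ) =
      urtDist f (g + 1) (.inl x) c + 1 - if c = v then 2 else 0 := by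
    intro c
    by_cases hc : c = v
    · rw [hc, if_pos rfl]
      simp only [v, urtDist, if_pos, urtDist_self]
      norm_num
    · rw [if_neg hc, urtDist_inr_of_ne hc]
      push_cast
      ring
  rw [Fintype.sum_congr _ _ key, Finset.sum_sub_distrib, Finset.sum_add_distrib,
    Finset.sum_ite_eq']
  simp [card_URTV]

lemma urtLabel_ne_nil : ∀ {g} (x : URTV f g), urtLabel f g x ≠ []
  | 0, _ => List.cons_ne_nil _ _
  | _ + 1, .inl x => urtLabel_ne_nil x
  | _ + 1, .inr _ => List.concat_ne_nil _ _

noncomputable def urtTransmission (f g : ℕ) (l : List ℕ) : ℝ :=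
  g * f * ((f : ℝ) + 1) ^ (g - 1) +
    ((f : ℝ) + 1) ^ g * (l.length - 2 * (l.map fun i => (((f : ℝ) + 1) ^ i)⁻¹).sum)

lemma urtTransmission_succ (f g : ℕ) (l : List ℕ) :
    urtTransmission f (g + 1) l = (f + 1) * urtTransmission f g l + f * (f + 1) ^ g := by
  have : (g : ℝ) * ((f : ℝ) + 1) ^ (g - 1) * (f + 1) = g * (f + 1) ^ g := by
    cases g <;> simp [pow_succ, mul_assoc]
  simp only [urtTransmission, Nat.cast_add, Nat.cast_one, add_tsub_cancel_right]
  linear_combination (-f : ℝ) * this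

lemma urtTransmission_append (f n : ℕ) (l : List ℕ) :
    urtTransmission f n (l ++ [n]) = urtTransmission f n l + (f + 1) ^ n - 2 := by
  have : ((f : ℝ) + 1) ^ n * (((f : ℝ) + 1) ^ n)⁻¹ = 1 := mul_inv_cancel₀ (by positivity)
  simp only [urtTransmission, List.length_append, List.map_append, List.sum_append,
    List.length_singleton, List.map_cons, List.map_nil, List.sum_singleton, Nat.cast_add,
    Nat.cast_one]
  linear_combination (-2) * this

lemma sum_urtDist_eq : ∀ {g} (x : URTV f g),
    ∑ y, (urtDist f g x y : ℝ) = urtTransmission f g (urtLabel f g x).tail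
  | 0, _ => by simp [urtDist, urtLabel, urtTransmission]
  | g + 1, .inl x => by
      rw [sum_urtDist_inl, sum_urtDist_eq x, ← urtTransmission_succ]
      rfl
  | g + 1, .inr (x, j) => by
      rw [sum_urtDist_inr, sum_urtDist_inl, sum_urtDist_eq x, ← urtTransmission_succ]
      show _ = urtTransmission f (g + 1) (urtLabel f g x ++ [g + 1]).tail
      rw [List.tail_append_of_ne_nil (urtLabel_ne_nil x), urtTransmission_append]

end URT

theorem stmt_17_general (f : ℕ) (g : ℕ) (x : URTV f g) :
    (∑ y : URTV f g, ((urtGraph f g).dist x y : ℝ)) =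
      (g : ℝ) * f * ((f : ℝ) + 1) ^ (g - 1) +
        ((f : ℝ) + 1) ^ g *
          (((urtLabel f g x).tail.length : ℝ) -
            2 * ((urtLabel f g x).tail.map
              (fun i => ((f : ℝ) + 1) ^ (-(i : ℤ)))).sum) := by
  simp only [urtGraph_dist_eq, sum_urtDist_eq, urtTransmission, List.pure_def,
    List.bind_eq_flatMap, ← List.map_eq_flatMap, List.map_map, Function.comp_def,
    _root_.zpow_neg, zpow_natCast]

/-- For a node `x` of the uniform recursive tree `U_g` with label `{0, i_1, …, i_n}`,
its resistance distance (the sum of resistance distances from `x` to all nodes;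
since `U_g` is a tree, resistance distance coincides with shortest-path distance)
equals `r_x(g) = g·f·(f+1)^{g-1} + (f+1)^g·[n - 2·Σ_{k=1}^{n} (f+1)^{-i_k}]`. -/
theorem stmt_17 (f : ℕ) (hf : 1 ≤ f) (g : ℕ) (x : URTV f g) :
    (∑ y : URTV f g, ((urtGraph f g).dist x y : ℝ)) =
      (g : ℝ) * f * ((f : ℝ) + 1) ^ (g - 1) +
        ((f : ℝ) + 1) ^ g *
          (((urtLabel f g x).tail.length : ℝ) -
            2 * ((urtLabel f g x).tail.map
              (fun i => ((f : ℝ) + 1) ^ (-(i : ℤ)))).sum) :=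
  stmt_17_general f g x
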